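/- For a surjective 𝔹ℂ-linear map T : X → Y between F-𝔹ℂ modules with closed graph, the function q : Y → 𝔻⁺ defined by q(y) = inf{‖x‖_𝔻 : x ∈ X, Tx = y} is a countably subadditive hyperbolic seminorm on Y. -/

import Mathlib

noncomputable section

/-- Bicomplex numbers 𝔹ℂ in idempotent coordinates: Z = e₁z₁ + e₂z₂ ↔ (z₁, z₂). -/
abbrev BC := ℂ × ℂ

/-- Hyperbolic numbers 𝔻 in idempotent coordinates: α = α₁e₁ + α₂e₂ ↔ (α₁, α₂). -/
abbrev Hyp := ℝ × ℝ

/-- Positive hyperbolic numbers 𝔻⁺. -/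
def Dpos : Set Hyp := {a | 0 ≤ a.1 ∧ 0 ≤ a.2}

/-- The partial order α ≤ β iff β - α ∈ 𝔻⁺. -/
def dle (a b : Hyp) : Prop := b - a ∈ Dpos

/-- The hyperbolic-valued norm |Z|_k = e₁|z₁| + e₂|z₂| of a bicomplex number. -/
def knorm (z : BC) : Hyp := (‖z.1‖, ‖z.2‖)

/-- The Euclidean modulus of a hyperbolic number α = β₁ + kβ₂, √(β₁² + β₂²),
expressed in idempotent coordinates. -/
def emod (d : Hyp) : ℝ := Real.sqrt ((d.1 ^ 2 + d.2 ^ 2) / 2)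

/-- A hyperbolic-valued norm on a 𝔹ℂ-module X. -/
structure HNorm (X : Type*) [AddCommGroup X] [Module BC X] where
  toFun : X → Hyp
  pos : ∀ x, toFun x ∈ Dpos
  eq_zero_iff : ∀ x, toFun x = 0 ↔ x = 0
  hsmul : ∀ (μ : BC) (x : X), toFun (μ • x) = knorm μ * toFun x
  triangle : ∀ x y, dle (toFun (x + y)) (toFun x + toFun y)

/-- A hyperbolic seminorm on a 𝔹ℂ-module X. -/
structure HSeminorm (X : Type*) [AddCommGroup X] [Module BC X] where
  toFun : X → Hyp
  pos : ∀ x, toFun x ∈ Dpos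
  hsmul : ∀ (μ : BC) (x : X), toFun (μ • x) = knorm μ * toFun x
  triangle : ∀ x y, dle (toFun (x + y)) (toFun x + toFun y)

variable {X : Type*} [AddCommGroup X] [Module BC X]

/-- The real-valued distance induced by a hyperbolic norm. -/
def HNorm.dist (N : HNorm X) (x y : X) : ℝ := emod (N.toFun (x - y))

/-- Convergence of a sequence with respect to a hyperbolic norm. -/
def TendstoH (N : HNorm X) (u : ℕ → X) (l : X) : Prop :=
  ∀ ε > (0 : ℝ), ∃ n₀, ∀ n ≥ n₀, N.dist (u n) l < ε

/-- Cauchy sequences with respect to a hyperbolic norm. -/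
def CauchyH (N : HNorm X) (u : ℕ → X) : Prop :=
  ∀ ε > (0 : ℝ), ∃ n₀, ∀ m ≥ n₀, ∀ n ≥ n₀, N.dist (u m) (u n) < ε

/-- X is an F-𝔹ℂ module: every Cauchy sequence converges. -/
def CompleteH (N : HNorm X) : Prop :=
  ∀ u : ℕ → X, CauchyH N u → ∃ l, TendstoH N u l

/-- The series Σ xₖ converges to s in X. -/
def SumToH (N : HNorm X) (x : ℕ → X) (s : X) : Prop :=
  TendstoH N (fun n => ∑ k ∈ Finset.range n, x k) s

/-- Convergence of a sequence of hyperbolic numbers. -/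
def TendstoD (u : ℕ → Hyp) (l : Hyp) : Prop :=
  ∀ ε > (0 : ℝ), ∃ n₀, ∀ n ≥ n₀, emod (u n - l) < ε

/-- The series Σ dₖ of hyperbolic numbers converges to L. -/
def SumToD (d : ℕ → Hyp) (L : Hyp) : Prop :=
  TendstoD (fun n => ∑ k ∈ Finset.range n, d k) L

/-- Open sets in the topology induced by a hyperbolic norm. -/
def IsOpenH (N : HNorm X) (U : Set X) : Prop :=
  ∀ x ∈ U, ∃ ε > (0 : ℝ), ∀ y, N.dist y x < ε → y ∈ U

/-- Dense sets in the topology induced by a hyperbolic norm. -/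
def DenseH (N : HNorm X) (U : Set X) : Prop :=
  ∀ x : X, ∀ ε > (0 : ℝ), ∃ y ∈ U, N.dist y x < ε

/-- The closure of a set in the topology induced by a hyperbolic norm. -/
def ClosureH (N : HNorm X) (S : Set X) : Set X :=
  {x | ∀ ε > (0 : ℝ), ∃ y ∈ S, N.dist y x < ε}

/-- Continuity of a 𝔻-valued map on X (w.r.t. the hyperbolic-norm topology on X and
the Euclidean topology on 𝔻). -/
def ContinuousHD (N : HNorm X) (p : X → Hyp) : Prop :=
  ∀ x : X, ∀ ε > (0 : ℝ), ∃ δ > (0 : ℝ), ∀ y, N.dist y x < δ → emod (p y - p x) < ε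

/-- A hyperbolic seminorm is countably subadditive if whenever Σ xₖ converges to x in X and
Σ p(xₖ) converges to L in 𝔻, we have p(x) ≤ L. -/
def CountablySubadditive (N : HNorm X) (p : HSeminorm X) : Prop :=
  ∀ (x : ℕ → X) (s : X) (L : Hyp),
    SumToH N x s → SumToD (fun k => p.toFun (x k)) L → dle (p.toFun s) L

section Maps

variable {Y : Type*} [AddCommGroup Y] [Module BC Y]

/-- 𝔹ℂ-linearity of a map between 𝔹ℂ-modules. -/
def IsBCLinear (T : X → Y) : Prop :=
  (∀ x y, T (x + y) = T x + T y) ∧ ∀ (μ : BC) (x : X), T (μ • x) = μ • T x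

/-- Continuity of a map between hyperbolic normed modules. -/
def ContinuousMapH (NX : HNorm X) (NY : HNorm Y) (T : X → Y) : Prop :=
  ∀ x : X, ∀ ε > (0 : ℝ), ∃ δ > (0 : ℝ), ∀ y, NX.dist y x < δ → NY.dist (T y) (T x) < ε

/-- The graph of T is closed: xₙ → x and Txₙ → y imply Tx = y. -/
def ClosedGraphH (NX : HNorm X) (NY : HNorm Y) (T : X → Y) : Prop :=
  ∀ (u : ℕ → X) (x : X) (y : Y),
    TendstoH NX u x → TendstoH NY (fun n => T (u n)) y → T x = y

/-- T is an open map: images of open sets are open. -/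
def IsOpenMapH (NX : HNorm X) (NY : HNorm Y) (T : X → Y) : Prop :=
  ∀ U : Set X, IsOpenH NX U → IsOpenH NY (T '' U)

end Maps

/-- The componentwise infimum in 𝔻⁺ of the norms of preimages of y. -/
def qinf {X Y : Type*} [AddCommGroup X] [Module BC X] [AddCommGroup Y] [Module BC Y]
    (NX : HNorm X) (T : X → Y) (y : Y) : Hyp :=
  (sInf ((fun x => (NX.toFun x).1) '' {x | T x = y}),
   sInf ((fun x => (NX.toFun x).2) '' {x | T x = y}))


section AuxLemmas

lemma dle_iff {a b : Hyp} : dle a b ↔ a.1 ≤ b.1 ∧ a.2 ≤ b.2 := by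
  unfold dle Dpos
  constructor <;> intro h <;>
    exact ⟨by have := h.1; simp at this ⊢; linarith, by have := h.2; simp at this ⊢; linarith⟩

lemma abs_fst_le_emod (d : Hyp) : |d.1| ≤ Real.sqrt 2 * emod d := by
  rw [emod, ← Real.sqrt_mul (by norm_num)]
  rw [show (2:ℝ) * ((d.1^2 + d.2^2)/2) = d.1^2 + d.2^2 by ring]
  rw [← Real.sqrt_sq_eq_abs d.1]
  exact Real.sqrt_le_sqrt (by nlinarith [sq_nonneg d.2])

lemma abs_snd_le_emod (d : Hyp) : |d.2| ≤ Real.sqrt 2 * emod d := by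
  rw [emod, ← Real.sqrt_mul (by norm_num)]
  rw [show (2:ℝ) * ((d.1^2 + d.2^2)/2) = d.1^2 + d.2^2 by ring]
  rw [← Real.sqrt_sq_eq_abs d.2]
  exact Real.sqrt_le_sqrt (by nlinarith [sq_nonneg d.1])

lemma emod_le_of_abs_le {d : Hyp} {c : ℝ} (h1 : |d.1| ≤ c) (h2 : |d.2| ≤ c) : emod d ≤ c := by
  have hc : 0 ≤ c := le_trans (abs_nonneg _) h1
  rw [emod, show c = Real.sqrt (c^2) by rw [Real.sqrt_sq hc]]
  apply Real.sqrt_le_sqrt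
  nlinarith [pow_le_pow_left₀ (abs_nonneg d.1) h1 2, pow_le_pow_left₀ (abs_nonneg d.2) h2 2,
    sq_abs d.1, sq_abs d.2]

lemma sqrt_two_lt_two : Real.sqrt 2 < 2 := by
  nlinarith [Real.sq_sqrt (by norm_num : (0:ℝ) ≤ 2), Real.sqrt_nonneg 2]

section NormLemmas
variable {X : Type*} [AddCommGroup X] [Module BC X] (N : HNorm X)

lemma HNorm.zero' : N.toFun 0 = 0 := (N.eq_zero_iff 0).2 rfl

lemma HNorm.neg' (x : X) : N.toFun (-x) = N.toFun x := by
  have h := N.hsmul (-1) x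
  rw [neg_one_smul] at h
  rw [h, show knorm (-1 : BC) = (1 : Hyp) by simp [knorm, Prod.ext_iff], one_mul]

lemma HNorm.dist_symm (x y : X) : N.dist x y = N.dist y x := by
  unfold HNorm.dist
  rw [show x - y = -(y - x) from (neg_sub y x).symm, N.neg']

lemma HNorm.tri1 (x y : X) : (N.toFun (x + y)).1 ≤ (N.toFun x).1 + (N.toFun y).1 := by
  have := (dle_iff.1 (N.triangle x y)).1; simpa using this

lemma HNorm.tri2 (x y : X) : (N.toFun (x + y)).2 ≤ (N.toFun x).2 + (N.toFun y).2 := by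
  have := (dle_iff.1 (N.triangle x y)).2; simpa using this

lemma HNorm.sum_le1 (u : ℕ → X) (s : Finset ℕ) :
    (N.toFun (∑ k ∈ s, u k)).1 ≤ ∑ k ∈ s, (N.toFun (u k)).1 := by
  induction s using Finset.cons_induction with
  | empty => simp [N.zero']
  | cons a s ha ih =>
      rw [Finset.sum_cons, Finset.sum_cons]
      exact le_trans (N.tri1 _ _) (by linarith)

lemma HNorm.sum_le2 (u : ℕ → X) (s : Finset ℕ) :
    (N.toFun (∑ k ∈ s, u k)).2 ≤ ∑ k ∈ s, (N.toFun (u k)).2 := by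
  induction s using Finset.cons_induction with
  | empty => simp [N.zero']
  | cons a s ha ih =>
      rw [Finset.sum_cons, Finset.sum_cons]
      exact le_trans (N.tri2 _ _) (by linarith)

end NormLemmas

section QLemmas
variable {X Y : Type*} [AddCommGroup X] [Module BC X] [AddCommGroup Y] [Module BC Y]
variable (NX : HNorm X) (T : X → Y)

lemma qinf_le1 {x : X} {y : Y} (hx : T x = y) : (qinf NX T y).1 ≤ (NX.toFun x).1 :=
  csInf_le ⟨0, fun r hr => by obtain ⟨z, _, rfl⟩ := hr; exact (NX.pos z).1⟩ ⟨x, hx, rfl⟩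

lemma qinf_le2 {x : X} {y : Y} (hx : T x = y) : (qinf NX T y).2 ≤ (NX.toFun x).2 :=
  csInf_le ⟨0, fun r hr => by obtain ⟨z, _, rfl⟩ := hr; exact (NX.pos z).2⟩ ⟨x, hx, rfl⟩

lemma le_qinf1 (hsurj : Function.Surjective T) {y : Y} {c : ℝ}
    (h : ∀ x, T x = y → c ≤ (NX.toFun x).1) : c ≤ (qinf NX T y).1 :=
  le_csInf (by obtain ⟨x, hx⟩ := hsurj y; exact ⟨_, ⟨x, hx, rfl⟩⟩)
    (fun r hr => by obtain ⟨z, hz, rfl⟩ := hr; exact h z hz)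

lemma le_qinf2 (hsurj : Function.Surjective T) {y : Y} {c : ℝ}
    (h : ∀ x, T x = y → c ≤ (NX.toFun x).2) : c ≤ (qinf NX T y).2 :=
  le_csInf (by obtain ⟨x, hx⟩ := hsurj y; exact ⟨_, ⟨x, hx, rfl⟩⟩)
    (fun r hr => by obtain ⟨z, hz, rfl⟩ := hr; exact h z hz)

lemma qinf_nonneg1 (hsurj : Function.Surjective T) (y : Y) : 0 ≤ (qinf NX T y).1 :=
  le_qinf1 NX T hsurj (fun x _ => (NX.pos x).1)

lemma qinf_nonneg2 (hsurj : Function.Surjective T) (y : Y) : 0 ≤ (qinf NX T y).2 :=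
  le_qinf2 NX T hsurj (fun x _ => (NX.pos x).2)

lemma exists_pre1 (hsurj : Function.Surjective T) (y : Y) {ε : ℝ} (hε : 0 < ε) :
    ∃ x, T x = y ∧ (NX.toFun x).1 < (qinf NX T y).1 + ε := by
  have hne : ((fun x => (NX.toFun x).1) '' {x | T x = y}).Nonempty := by
    obtain ⟨x, hx⟩ := hsurj y; exact ⟨_, ⟨x, hx, rfl⟩⟩
  obtain ⟨r, ⟨z, hz, rfl⟩, hr⟩ := Real.lt_sInf_add_pos hne hε
  exact ⟨z, hz, hr⟩

lemma exists_pre2 (hsurj : Function.Surjective T) (y : Y) {ε : ℝ} (hε : 0 < ε) :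
    ∃ x, T x = y ∧ (NX.toFun x).2 < (qinf NX T y).2 + ε := by
  have hne : ((fun x => (NX.toFun x).2) '' {x | T x = y}).Nonempty := by
    obtain ⟨x, hx⟩ := hsurj y; exact ⟨_, ⟨x, hx, rfl⟩⟩
  obtain ⟨r, ⟨z, hz, rfl⟩, hr⟩ := Real.lt_sInf_add_pos hne hε
  exact ⟨z, hz, hr⟩

lemma exists_pre (hlin : IsBCLinear T) (hsurj : Function.Surjective T) (y : Y)
    {ε : ℝ} (hε : 0 < ε) :
    ∃ x, T x = y ∧ (NX.toFun x).1 < (qinf NX T y).1 + ε ∧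
      (NX.toFun x).2 < (qinf NX T y).2 + ε := by
  obtain ⟨a, ha, ha1⟩ := exists_pre1 NX T hsurj y hε
  obtain ⟨b, hb, hb2⟩ := exists_pre2 NX T hsurj y hε
  refine ⟨((1:ℂ),(0:ℂ)) • a + ((0:ℂ),(1:ℂ)) • b, ?_, ?_, ?_⟩
  · rw [hlin.1, hlin.2, hlin.2, ha, hb, ← add_smul,
      show ((1:ℂ),(0:ℂ)) + ((0:ℂ),(1:ℂ)) = (1 : BC) by simp [Prod.ext_iff], one_smul]
  · refine lt_of_le_of_lt (le_trans (NX.tri1 _ _) ?_) ha1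
    rw [NX.hsmul, NX.hsmul]
    simp [knorm]
  · refine lt_of_le_of_lt (le_trans (NX.tri2 _ _) ?_) hb2
    rw [NX.hsmul, NX.hsmul]
    simp [knorm]

lemma qinf_smul1 (hlin : IsBCLinear T) (hsurj : Function.Surjective T) (μ : BC) (y : Y) :
    (qinf NX T (μ • y)).1 = ‖μ.1‖ * (qinf NX T y).1 := by
  obtain ⟨x₀, hx₀⟩ := hsurj y
  by_cases hμ : μ.1 = 0
  · have hT : T (μ • x₀) = μ • y := by rw [hlin.2, hx₀]
    have hle := qinf_le1 NX T hT
    rw [NX.hsmul] at hle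
    simp only [knorm, hμ, map_zero, Prod.fst_mul] at hle
    rw [hμ, norm_zero, zero_mul]
    exact le_antisymm (by simpa using hle) (qinf_nonneg1 NX T hsurj _)
  · have hc : (0:ℝ) < ‖μ.1‖ := by
      simpa [AbsoluteValue.pos_iff] using hμ
    apply le_antisymm
    · rw [← div_le_iff₀' hc]
      apply le_qinf1 NX T hsurj
      intro v hv
      rw [div_le_iff₀' hc]
      have hT : T (μ • v) = μ • y := by rw [hlin.2, hv]
      have := qinf_le1 NX T hT
      rwa [NX.hsmul, show (knorm μ * NX.toFun v).1 = ‖μ.1‖ * (NX.toFun v).1 by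
        simp [knorm]] at this
    · apply le_qinf1 NX T hsurj
      intro w hw
      set v := ((μ.1⁻¹ : ℂ), (0:ℂ)) • w + ((0:ℂ),(1:ℂ)) • x₀ with hv
      have hTv : T v = y := by
        rw [hv, hlin.1, hlin.2, hlin.2, hw, hx₀, ← mul_smul, ← add_smul]
        rw [show ((μ.1⁻¹ : ℂ), (0:ℂ)) * μ + ((0:ℂ),(1:ℂ)) = (1 : BC) by
          simp [Prod.ext_iff, inv_mul_cancel₀ hμ]]
        rw [one_smul]
      have h1 : (qinf NX T y).1 ≤ (NX.toFun v).1 := qinf_le1 NX T hTv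
      have h2 : (NX.toFun v).1 ≤ (‖μ.1‖)⁻¹ * (NX.toFun w).1 := by
        refine le_trans (NX.tri1 _ _) ?_
        rw [NX.hsmul, NX.hsmul]
        simp [knorm, map_inv₀]
      calc ‖μ.1‖ * (qinf NX T y).1
          ≤ ‖μ.1‖ * ((‖μ.1‖)⁻¹ * (NX.toFun w).1) := by
            apply mul_le_mul_of_nonneg_left (le_trans h1 h2) hc.le
        _ = (NX.toFun w).1 := by field_simp

lemma qinf_smul2 (hlin : IsBCLinear T) (hsurj : Function.Surjective T) (μ : BC) (y : Y) :
    (qinf NX T (μ • y)).2 = ‖μ.2‖ * (qinf NX T y).2 := by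
  obtain ⟨x₀, hx₀⟩ := hsurj y
  by_cases hμ : μ.2 = 0
  · have hT : T (μ • x₀) = μ • y := by rw [hlin.2, hx₀]
    have hle := qinf_le2 NX T hT
    rw [NX.hsmul] at hle
    simp only [knorm, hμ, map_zero, Prod.snd_mul] at hle
    rw [hμ, norm_zero, zero_mul]
    exact le_antisymm (by simpa using hle) (qinf_nonneg2 NX T hsurj _)
  · have hc : (0:ℝ) < ‖μ.2‖ := by
      simpa [AbsoluteValue.pos_iff] using hμ
    apply le_antisymm
    · rw [← div_le_iff₀' hc]
      apply le_qinf2 NX T hsurj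
      intro v hv
      rw [div_le_iff₀' hc]
      have hT : T (μ • v) = μ • y := by rw [hlin.2, hv]
      have := qinf_le2 NX T hT
      rwa [NX.hsmul, show (knorm μ * NX.toFun v).2 = ‖μ.2‖ * (NX.toFun v).2 by
        simp [knorm]] at this
    · apply le_qinf2 NX T hsurj
      intro w hw
      set v := ((0:ℂ), (μ.2⁻¹ : ℂ)) • w + ((1:ℂ),(0:ℂ)) • x₀ with hv
      have hTv : T v = y := by
        rw [hv, hlin.1, hlin.2, hlin.2, hw, hx₀, ← mul_smul, ← add_smul]
        rw [show ((0:ℂ), (μ.2⁻¹ : ℂ)) * μ + ((1:ℂ),(0:ℂ)) = (1 : BC) by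
          simp [Prod.ext_iff, inv_mul_cancel₀ hμ]]
        rw [one_smul]
      have h1 : (qinf NX T y).2 ≤ (NX.toFun v).2 := qinf_le2 NX T hTv
      have h2 : (NX.toFun v).2 ≤ (‖μ.2‖)⁻¹ * (NX.toFun w).2 := by
        refine le_trans (NX.tri2 _ _) ?_
        rw [NX.hsmul, NX.hsmul]
        simp [knorm, map_inv₀]
      calc ‖μ.2‖ * (qinf NX T y).2
          ≤ ‖μ.2‖ * ((‖μ.2‖)⁻¹ * (NX.toFun w).2) := by
            apply mul_le_mul_of_nonneg_left (le_trans h1 h2) hc.le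
        _ = (NX.toFun w).2 := by field_simp

end QLemmas

lemma geom_tail_eq (n : ℕ) : ∀ m, n ≤ m →
    ∑ k ∈ Finset.Ico n m, ((1:ℝ)/2)^(k+1) = (1/2)^n - (1/2)^m := by
  intro m
  induction m with
  | zero => intro h; interval_cases n; simp
  | succ m ih =>
      intro h
      rcases Nat.lt_or_ge n (m+1) with h' | h'
      · have hnm : n ≤ m := Nat.lt_succ_iff.mp h'
        rw [Finset.sum_Ico_succ_top hnm, ih hnm]
        ring
      · have : n = m + 1 := le_antisymm h h'
        subst this; simp

end AuxLemmas

/-- For a surjective 𝔹ℂ-linear map with closed graph between F-𝔹ℂ modules, the map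
q(y) = inf{‖x‖_𝔻 : Tx = y} is a countably subadditive hyperbolic seminorm on Y. -/
theorem qinf_countably_subadditive_seminorm {X Y : Type*}
    [AddCommGroup X] [Module BC X] [AddCommGroup Y] [Module BC Y]
    (NX : HNorm X) (NY : HNorm Y) (hCX : CompleteH NX) (hCY : CompleteH NY)
    (T : X → Y) (hlin : IsBCLinear T) (hsurj : Function.Surjective T)
    (hG : ClosedGraphH NX NY T) :
    (∀ y : Y, qinf NX T y ∈ Dpos) ∧
    (∀ (μ : BC) (y : Y), qinf NX T (μ • y) = knorm μ * qinf NX T y) ∧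
    (∀ y₁ y₂ : Y, dle (qinf NX T (y₁ + y₂)) (qinf NX T y₁ + qinf NX T y₂)) ∧
    (∀ (y : ℕ → Y) (s : Y) (L : Hyp),
      SumToH NY y s → SumToD (fun k => qinf NX T (y k)) L →
        dle (qinf NX T s) L) := by
  obtain ⟨hlinA, hlinS⟩ := hlin
  have hlin' : IsBCLinear T := ⟨hlinA, hlinS⟩
  refine ⟨fun y => ⟨qinf_nonneg1 NX T hsurj y, qinf_nonneg2 NX T hsurj y⟩, ?_, ?_, ?_⟩
  · intro μ y
    have h1 := qinf_smul1 NX T hlin' hsurj μ y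
    have h2 := qinf_smul2 NX T hlin' hsurj μ y
    exact Prod.ext (by rw [h1]; simp [knorm]) (by rw [h2]; simp [knorm])
  · intro y₁ y₂
    rw [dle_iff]
    constructor
    · apply le_of_forall_pos_lt_add
      intro ε hε
      obtain ⟨x₁, hx₁, hx₁'⟩ := exists_pre1 NX T hsurj y₁ (show 0 < ε/2 by linarith)
      obtain ⟨x₂, hx₂, hx₂'⟩ := exists_pre1 NX T hsurj y₂ (show 0 < ε/2 by linarith)
      have hT : T (x₁ + x₂) = y₁ + y₂ := by rw [hlinA, hx₁, hx₂]
      have h := le_trans (qinf_le1 NX T hT) (NX.tri1 x₁ x₂)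
      have : ((qinf NX T y₁) + (qinf NX T y₂)).1
          = (qinf NX T y₁).1 + (qinf NX T y₂).1 := rfl
      rw [this]
      linarith
    · apply le_of_forall_pos_lt_add
      intro ε hε
      obtain ⟨x₁, hx₁, hx₁'⟩ := exists_pre2 NX T hsurj y₁ (show 0 < ε/2 by linarith)
      obtain ⟨x₂, hx₂, hx₂'⟩ := exists_pre2 NX T hsurj y₂ (show 0 < ε/2 by linarith)
      have hT : T (x₁ + x₂) = y₁ + y₂ := by rw [hlinA, hx₁, hx₂]
      have h := le_trans (qinf_le2 NX T hT) (NX.tri2 x₁ x₂)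
      have : ((qinf NX T y₁) + (qinf NX T y₂)).2
          = (qinf NX T y₁).2 + (qinf NX T y₂).2 := rfl
      rw [this]
      linarith
  · -- countable subadditivity
    intro y s L hsumH hsumD
    set P1 : ℕ → ℝ := fun n => ∑ k ∈ Finset.range n, (qinf NX T (y k)).1 with hP1def
    set P2 : ℕ → ℝ := fun n => ∑ k ∈ Finset.range n, (qinf NX T (y k)).2 with hP2def
    -- componentwise convergence of partial sums of q(y k)
    have hPconv : ∀ δ > (0:ℝ), ∃ n₀, ∀ n ≥ n₀, |P1 n - L.1| < δ ∧ |P2 n - L.2| < δ := by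
      intro δ hδ
      obtain ⟨n₀, hn₀⟩ := hsumD (δ/2) (by linarith)
      refine ⟨n₀, fun n hn => ?_⟩
      have h := hn₀ n hn
      have hs2 : (0:ℝ) < Real.sqrt 2 := by positivity
      constructor
      · have h1 := abs_fst_le_emod ((∑ k ∈ Finset.range n, qinf NX T (y k)) - L)
        have he : ((∑ k ∈ Finset.range n, qinf NX T (y k)) - L).1 = P1 n - L.1 := by
          simp [hP1def, Prod.fst_sum]
        rw [he] at h1
        calc |P1 n - L.1| ≤ Real.sqrt 2 * emod ((∑ k ∈ Finset.range n, qinf NX T (y k)) - L) := h1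
          _ < Real.sqrt 2 * (δ/2) := by exact mul_lt_mul_of_pos_left h hs2
          _ ≤ 2 * (δ/2) := by nlinarith [sqrt_two_lt_two]
          _ = δ := by ring
      · have h1 := abs_snd_le_emod ((∑ k ∈ Finset.range n, qinf NX T (y k)) - L)
        have he : ((∑ k ∈ Finset.range n, qinf NX T (y k)) - L).2 = P2 n - L.2 := by
          simp [hP2def, Prod.snd_sum]
        rw [he] at h1
        calc |P2 n - L.2| ≤ Real.sqrt 2 * emod ((∑ k ∈ Finset.range n, qinf NX T (y k)) - L) := h1
          _ < Real.sqrt 2 * (δ/2) := by exact mul_lt_mul_of_pos_left h hs2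
          _ ≤ 2 * (δ/2) := by nlinarith [sqrt_two_lt_two]
          _ = δ := by ring
    -- partial sums are bounded by L componentwise
    have hPle : ∀ n, P1 n ≤ L.1 ∧ P2 n ≤ L.2 := by
      intro n
      have hmono1 : ∀ m, n ≤ m → P1 n ≤ P1 m := by
        intro m hm
        apply Finset.sum_le_sum_of_subset_of_nonneg (Finset.range_subset_range.2 hm)
        intro k _ _; exact qinf_nonneg1 NX T hsurj (y k)
      have hmono2 : ∀ m, n ≤ m → P2 n ≤ P2 m := by
        intro m hm
        apply Finset.sum_le_sum_of_subset_of_nonneg (Finset.range_subset_range.2 hm)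
        intro k _ _; exact qinf_nonneg2 NX T hsurj (y k)
      constructor <;> apply le_of_forall_pos_lt_add <;> intro δ hδ <;>
        obtain ⟨n₀, h⟩ := hPconv δ hδ
      · have h1 := (h (max n n₀) (le_max_right _ _)).1
        have := hmono1 (max n n₀) (le_max_left _ _)
        have := abs_lt.1 h1
        linarith [this.2]
      · have h1 := (h (max n n₀) (le_max_right _ _)).2
        have := hmono2 (max n n₀) (le_max_left _ _)
        have := abs_lt.1 h1
        linarith [this.2]
    rw [dle_iff]
    have hmain : ∀ ε > (0:ℝ), (qinf NX T s).1 ≤ L.1 + 2*ε ∧ (qinf NX T s).2 ≤ L.2 + 2*ε := by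
      intro ε hε
      -- choose good preimages
      have hxk : ∀ k : ℕ, ∃ x, T x = y k ∧
          (NX.toFun x).1 < (qinf NX T (y k)).1 + ε * (1/2)^(k+1) ∧
          (NX.toFun x).2 < (qinf NX T (y k)).2 + ε * (1/2)^(k+1) :=
        fun k => exists_pre NX T hlin' hsurj (y k) (by positivity)
      choose x hxT hx1 hx2 using hxk
      set S : ℕ → X := fun n => ∑ k ∈ Finset.range n, x k with hSdef
      have hT0 : T 0 = 0 := by rw [← zero_smul BC (0:X), hlinS, zero_smul]
      have hTS : ∀ n, T (S n) = ∑ k ∈ Finset.range n, y k := by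
        intro n
        induction n with
        | zero => simp [hSdef, hT0]
        | succ n ih =>
            rw [hSdef]
            simp only [Finset.sum_range_succ]
            rw [hlinA, hxT]
            exact congrArg (fun t => t + y n) ih
      -- block estimates
      have hblock : ∀ n m, n ≤ m →
          (NX.toFun (S m - S n)).1 ≤ (P1 m - P1 n) + ε * (1/2)^n ∧
          (NX.toFun (S m - S n)).2 ≤ (P2 m - P2 n) + ε * (1/2)^n := by
        intro n m hnm
        have hS : S m - S n = ∑ k ∈ Finset.Ico n m, x k := by
          rw [hSdef]; exact (Finset.sum_Ico_eq_sub x hnm).symm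
        have hgeom : ∑ k ∈ Finset.Ico n m, ε * ((1:ℝ)/2)^(k+1) ≤ ε * (1/2)^n := by
          rw [← Finset.mul_sum, geom_tail_eq n m hnm]
          have : (0:ℝ) ≤ (1/2:ℝ)^m := by positivity
          nlinarith
        constructor
        · rw [hS]
          refine le_trans (NX.sum_le1 x _) ?_
          have hsum : ∑ k ∈ Finset.Ico n m, (NX.toFun (x k)).1
              ≤ ∑ k ∈ Finset.Ico n m, ((qinf NX T (y k)).1 + ε * (1/2)^(k+1)) :=
            Finset.sum_le_sum (fun k _ => (hx1 k).le)
          rw [Finset.sum_add_distrib] at hsum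
          have hq : ∑ k ∈ Finset.Ico n m, (qinf NX T (y k)).1 = P1 m - P1 n :=
            Finset.sum_Ico_eq_sub _ hnm
          rw [hq] at hsum
          linarith
        · rw [hS]
          refine le_trans (NX.sum_le2 x _) ?_
          have hsum : ∑ k ∈ Finset.Ico n m, (NX.toFun (x k)).2
              ≤ ∑ k ∈ Finset.Ico n m, ((qinf NX T (y k)).2 + ε * (1/2)^(k+1)) :=
            Finset.sum_le_sum (fun k _ => (hx2 k).le)
          rw [Finset.sum_add_distrib] at hsum
          have hq : ∑ k ∈ Finset.Ico n m, (qinf NX T (y k)).2 = P2 m - P2 n :=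
            Finset.sum_Ico_eq_sub _ hnm
          rw [hq] at hsum
          linarith
      -- S is Cauchy
      have hC : CauchyH NX S := by
        intro δ hδ
        obtain ⟨n₁, h₁⟩ := hPconv (δ/6) (by linarith)
        obtain ⟨n₂, h₂⟩ := exists_pow_lt_of_lt_one
          (show (0:ℝ) < δ/(6*ε) by positivity) (show (1:ℝ)/2 < 1 by norm_num)
        refine ⟨max n₁ n₂, ?_⟩
        have key : ∀ m n, max n₁ n₂ ≤ n → n ≤ m → NX.dist (S m) (S n) < δ := by
          intro m n hn hnm
          have hn₁ : n₁ ≤ n := le_trans (le_max_left _ _) hn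
          have hn₂ : n₂ ≤ n := le_trans (le_max_right _ _) hn
          have hm₁ : n₁ ≤ m := le_trans hn₁ hnm
          have hpow : ((1:ℝ)/2)^n ≤ (1/2)^n₂ :=
            pow_le_pow_of_le_one (by norm_num) (by norm_num) hn₂
          have hεp : ε * ((1:ℝ)/2)^n < δ/6 := by
            have : ε * ((1:ℝ)/2)^n ≤ ε * (1/2)^n₂ :=
              mul_le_mul_of_nonneg_left hpow hε.le
            have h2' : ε * ((1:ℝ)/2)^n₂ < ε * (δ/(6*ε)) :=
              mul_lt_mul_of_pos_left h₂ hε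
            have : ε * (δ/(6*ε)) = δ/6 := by field_simp
            linarith
          have hd1 : P1 m - P1 n < δ/3 := by
            have a := abs_lt.1 (h₁ m hm₁).1
            have b := abs_lt.1 (h₁ n hn₁).1
            linarith [a.2, b.1]
          have hd2 : P2 m - P2 n < δ/3 := by
            have a := abs_lt.1 (h₁ m hm₁).2
            have b := abs_lt.1 (h₁ n hn₁).2
            linarith [a.2, b.1]
          obtain ⟨hb1, hb2⟩ := hblock n m hnm
          have ht1 : |(NX.toFun (S m - S n)).1| ≤ δ/2 := by
            rw [abs_of_nonneg (NX.pos _).1]; linarith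
          have ht2 : |(NX.toFun (S m - S n)).2| ≤ δ/2 := by
            rw [abs_of_nonneg (NX.pos _).2]; linarith
          have := emod_le_of_abs_le ht1 ht2
          unfold HNorm.dist
          linarith
        intro m hm n hn
        rcases le_total n m with h | h
        · exact key m n hn h
        · rw [NX.dist_symm]; exact key n m hm h
      obtain ⟨xl, hxl⟩ := hCX S hC
      have hTxl : T xl = s := by
        refine hG S xl s hxl ?_
        have heq : (fun n => T (S n)) = fun n => ∑ k ∈ Finset.range n, y k := funext hTS
        rw [heq]
        exact hsumH
      have hS0 : S 0 = 0 := by simp [hSdef]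
      have hSn1 : ∀ n, (NX.toFun (S n)).1 ≤ L.1 + ε := by
        intro n
        have := (hblock 0 n (Nat.zero_le n)).1
        rw [hS0, sub_zero] at this
        have hP0 : P1 0 = 0 := by simp [hP1def]
        have := hPle n
        simp only [hP0, pow_zero, mul_one, sub_zero] at *
        linarith [(hPle n).1]
      have hSn2 : ∀ n, (NX.toFun (S n)).2 ≤ L.2 + ε := by
        intro n
        have := (hblock 0 n (Nat.zero_le n)).2
        rw [hS0, sub_zero] at this
        have hP0 : P2 0 = 0 := by simp [hP2def]
        simp only [hP0, pow_zero, mul_one, sub_zero] at *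
        linarith [(hPle n).2]
      constructor
      · apply le_of_forall_pos_lt_add
        intro δ hδ
        obtain ⟨n₃, h₃⟩ := hxl (δ/4) (by linarith)
        have hdist : NX.dist (S n₃) xl < δ/4 := h₃ n₃ (le_refl _)
        have hsplit : xl = S n₃ + (xl - S n₃) := by abel
        have htri := NX.tri1 (S n₃) (xl - S n₃)
        rw [← hsplit] at htri
        have hrem : (NX.toFun (xl - S n₃)).1 < δ/2 := by
          have h1 := abs_fst_le_emod (NX.toFun (xl - S n₃))
          rw [abs_of_nonneg (NX.pos _).1] at h1
          have : emod (NX.toFun (xl - S n₃)) = NX.dist (S n₃) xl := by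
            rw [NX.dist_symm]; rfl
          rw [this] at h1
          have hs2 : Real.sqrt 2 * NX.dist (S n₃) xl ≤ 2 * NX.dist (S n₃) xl := by
            have : (0:ℝ) ≤ NX.dist (S n₃) xl := by
              rw [← this]; exact Real.sqrt_nonneg _
            nlinarith [sqrt_two_lt_two]
          linarith
        have hq := qinf_le1 NX T hTxl
        linarith [hSn1 n₃]
      · apply le_of_forall_pos_lt_add
        intro δ hδ
        obtain ⟨n₃, h₃⟩ := hxl (δ/4) (by linarith)
        have hdist : NX.dist (S n₃) xl < δ/4 := h₃ n₃ (le_refl _)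
        have hsplit : xl = S n₃ + (xl - S n₃) := by abel
        have htri := NX.tri2 (S n₃) (xl - S n₃)
        rw [← hsplit] at htri
        have hrem : (NX.toFun (xl - S n₃)).2 < δ/2 := by
          have h1 := abs_snd_le_emod (NX.toFun (xl - S n₃))
          rw [abs_of_nonneg (NX.pos _).2] at h1
          have : emod (NX.toFun (xl - S n₃)) = NX.dist (S n₃) xl := by
            rw [NX.dist_symm]; rfl
          rw [this] at h1
          have hs2 : Real.sqrt 2 * NX.dist (S n₃) xl ≤ 2 * NX.dist (S n₃) xl := by
            have : (0:ℝ) ≤ NX.dist (S n₃) xl := by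
              rw [← this]; exact Real.sqrt_nonneg _
            nlinarith [sqrt_two_lt_two]
          linarith
        have hq := qinf_le2 NX T hTxl
        linarith [hSn2 n₃]
    constructor
    · apply le_of_forall_pos_lt_add
      intro ε hε
      have := (hmain (ε/4) (by linarith)).1
      linarith
    · apply le_of_forall_pos_lt_add
      intro ε hε
      have := (hmain (ε/4) (by linarith)).2
      linarith
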